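/- arXiv:2512.19257 — 3 statements merged into one kernel-verified Lean document; each statement's English description precedes it below -/
import Mathlib

section
/- For every k ∈ {1,…,6}, the k-th elementary symmetric polynomial σ_k of A₁,…,A₆ satisfies g·σ_k = σ_k for every element g of the subgroup of GL(4,ℂ) generated by s₁,…,s₅. -/
open Complex Matrix MvPolynomial

/-- The five generating matrices s₁, …, s₅ of the little Weyl group `W₀ ⊂ GL(4,ℂ)`. -/
noncomputable def s : Fin 5 → Matrix (Fin 4) (Fin 4) ℂ :=
  ![!![-1, 0, 0, 0; 0, 1, 0, 0; 0, 0, 1, 0; 0, 0, 0, 1],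
    !![0, -1, 0, 0; -1, 0, 0, 0; 0, 0, 1, 0; 0, 0, 0, 1],
    !![0, -I, 0, 0; I, 0, 0, 0; 0, 0, 1, 0; 0, 0, 0, 1],
    (1/2 : ℂ) • !![1, -1, -1, -1; -1, 1, -1, -1; -1, -1, 1, -1; -1, -1, -1, 1],
    (1/2 : ℂ) • !![0, 0, -1-I, -1+I; 0, 2, 0, 0; -1+I, 0, 1, I; -1-I, 0, -I, 1]]

/-- The action of `g ∈ GL(4,ℂ)` on polynomials: substitute for `(x₁,…,x₄)` the entries of
    `g` applied to the column vector `(x₁,…,x₄)`. -/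
noncomputable def act (g : Matrix (Fin 4) (Fin 4) ℂ) (P : MvPolynomial (Fin 4) ℂ) :
    MvPolynomial (Fin 4) ℂ :=
  aeval (fun j => ∑ k, C (g j k) * X k) P

/-- The six quartics A₁, …, A₆ (variables x₁,…,x₄ are `X 0, …, X 3`). -/
noncomputable def A : Fin 6 → MvPolynomial (Fin 4) ℂ :=
  ![2 * X 0 ^ 4 + 2 * X 1 ^ 4 - X 2 ^ 4 - X 3 ^ 4
      + 12 * X 0 * X 1 * (X 2 ^ 2 + X 3 ^ 2) + 6 * X 2 ^ 2 * X 3 ^ 2,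
    -X 0 ^ 4 - X 1 ^ 4 + 2 * X 2 ^ 4 + 2 * X 3 ^ 4
      + 6 * X 0 ^ 2 * X 1 ^ 2 - 12 * (X 0 ^ 2 + X 1 ^ 2) * X 2 * X 3,
    2 * X 0 ^ 4 + 2 * X 1 ^ 4 - X 2 ^ 4 - X 3 ^ 4
      - 12 * X 0 * X 1 * (X 2 ^ 2 + X 3 ^ 2) + 6 * X 2 ^ 2 * X 3 ^ 2,
    -X 0 ^ 4 - X 1 ^ 4 + 2 * X 2 ^ 4 + 2 * X 3 ^ 4
      + 6 * X 0 ^ 2 * X 1 ^ 2 + 12 * (X 0 ^ 2 + X 1 ^ 2) * X 2 * X 3,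
    -X 0 ^ 4 - X 1 ^ 4 - X 2 ^ 4 - X 3 ^ 4 - 6 * X 0 ^ 2 * X 1 ^ 2
      + C (6 * I) * (X 0 ^ 2 - X 1 ^ 2) * (X 2 ^ 2 - X 3 ^ 2) - 6 * X 2 ^ 2 * X 3 ^ 2,
    -X 0 ^ 4 - X 1 ^ 4 - X 2 ^ 4 - X 3 ^ 4 - 6 * X 0 ^ 2 * X 1 ^ 2
      - C (6 * I) * (X 0 ^ 2 - X 1 ^ 2) * (X 2 ^ 2 - X 3 ^ 2) - 6 * X 2 ^ 2 * X 3 ^ 2]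

/-- The k-th elementary symmetric polynomial of A₁, …, A₆. -/
noncomputable def σ (k : ℕ) : MvPolynomial (Fin 4) ℂ :=
  ∑ t ∈ Finset.powersetCard k (Finset.univ : Finset (Fin 6)), ∏ j ∈ t, A j

private lemma I2 : (I : ℂ) ^ 2 = -1 := Complex.I_sq
private lemma I3 : (I : ℂ) ^ 3 = -I := by rw [pow_succ, I2]; ring
private lemma I4 : (I : ℂ) ^ 4 = 1 := by rw [pow_succ, I3]; simp [Complex.I_mul_I]
private lemma I5 : (I : ℂ) ^ 5 = I := by rw [pow_succ, I4, one_mul]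
private lemma I6 : (I : ℂ) ^ 6 = -1 := by rw [pow_succ, I5, Complex.I_mul_I]
private lemma I7 : (I : ℂ) ^ 7 = -I := by rw [pow_succ, I6]; ring
private lemma I8 : (I : ℂ) ^ 8 = 1 := by rw [pow_succ, I7]; simp [Complex.I_mul_I]

lemma act_one (P : MvPolynomial (Fin 4) ℂ) : act 1 P = P := by
  have h : (fun j => ∑ k, C ((1 : Matrix (Fin 4) (Fin 4) ℂ) j k) * X k)
      = (X : Fin 4 → MvPolynomial (Fin 4) ℂ) := by
    funext j
    simp [Matrix.one_apply, Finset.sum_ite_eq, apply_ite]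
  rw [act, h, aeval_X_left_apply]

lemma act_act (g h : Matrix (Fin 4) (Fin 4) ℂ) (P : MvPolynomial (Fin 4) ℂ) :
    act g (act h P) = act (h * g) P := by
  unfold act
  rw [← AlgHom.comp_apply, comp_aeval]
  have h1 : ∀ i, (aeval fun j => ∑ k, C (g j k) * X k) (∑ k : Fin 4, C (h i k) * X k)
      = ∑ k : Fin 4, C ((h * g) i k) * X k := by
    intro i
    simp only [Matrix.mul_apply, Fin.sum_univ_four, map_add, _root_.map_mul, aeval_X, aeval_C,
      algebraMap_eq, map_sum]
    ring
  simp only [h1]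

lemma eval_act (g : Matrix (Fin 4) (Fin 4) ℂ) (x : Fin 4 → ℂ) (P : MvPolynomial (Fin 4) ℂ) :
    eval x (act g P) = eval (fun j => ∑ k, g j k * x k) P := by
  unfold act
  rw [aeval_def, algebraMap_eq, eval₂_comp_left (eval x) C _ P]
  congr 1
  · ext r; simp
  · funext j; simp

private lemma Aex0 : A 0 = 2 * X 0 ^ 4 + 2 * X 1 ^ 4 - X 2 ^ 4 - X 3 ^ 4 + 12 * X 0 * X 1 * (X 2 ^ 2 + X 3 ^ 2) + 6 * X 2 ^ 2 * X 3 ^ 2 := rfl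

private lemma Aex1 : A 1 = -X 0 ^ 4 - X 1 ^ 4 + 2 * X 2 ^ 4 + 2 * X 3 ^ 4 + 6 * X 0 ^ 2 * X 1 ^ 2 - 12 * (X 0 ^ 2 + X 1 ^ 2) * X 2 * X 3 := rfl

private lemma Aex2 : A 2 = 2 * X 0 ^ 4 + 2 * X 1 ^ 4 - X 2 ^ 4 - X 3 ^ 4 - 12 * X 0 * X 1 * (X 2 ^ 2 + X 3 ^ 2) + 6 * X 2 ^ 2 * X 3 ^ 2 := rfl

private lemma Aex3 : A 3 = -X 0 ^ 4 - X 1 ^ 4 + 2 * X 2 ^ 4 + 2 * X 3 ^ 4 + 6 * X 0 ^ 2 * X 1 ^ 2 + 12 * (X 0 ^ 2 + X 1 ^ 2) * X 2 * X 3 := rfl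

private lemma Aex4 : A 4 = -X 0 ^ 4 - X 1 ^ 4 - X 2 ^ 4 - X 3 ^ 4 - 6 * X 0 ^ 2 * X 1 ^ 2 + C (6 * I) * (X 0 ^ 2 - X 1 ^ 2) * (X 2 ^ 2 - X 3 ^ 2) - 6 * X 2 ^ 2 * X 3 ^ 2 := rfl

private lemma Aex5 : A 5 = -X 0 ^ 4 - X 1 ^ 4 - X 2 ^ 4 - X 3 ^ 4 - 6 * X 0 ^ 2 * X 1 ^ 2 - C (6 * I) * (X 0 ^ 2 - X 1 ^ 2) * (X 2 ^ 2 - X 3 ^ 2) - 6 * X 2 ^ 2 * X 3 ^ 2 := rfl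

private lemma sub0 (x : Fin 4 → ℂ) : (fun j => ∑ k, s 0 j k * x k) = ![-x 0, x 1, x 2, x 3] := by
  funext j
  fin_cases j <;>
    simp [s, Fin.sum_univ_four, Matrix.cons_val_zero, Matrix.cons_val_one, Matrix.head_cons,
      Matrix.cons_val_two, Matrix.cons_val_three, Matrix.cons_val_four, Matrix.tail_cons] <;>
    ring

private lemma sub1 (x : Fin 4 → ℂ) : (fun j => ∑ k, s 1 j k * x k) = ![-x 1, -x 0, x 2, x 3] := by
  funext j
  fin_cases j <;>
    simp [s, Fin.sum_univ_four, Matrix.cons_val_zero, Matrix.cons_val_one, Matrix.head_cons,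
      Matrix.cons_val_two, Matrix.cons_val_three, Matrix.cons_val_four, Matrix.tail_cons] <;>
    ring

private lemma sub2 (x : Fin 4 → ℂ) : (fun j => ∑ k, s 2 j k * x k) = ![-I * x 1, I * x 0, x 2, x 3] := by
  funext j
  fin_cases j <;>
    simp [s, Fin.sum_univ_four, Matrix.cons_val_zero, Matrix.cons_val_one, Matrix.head_cons,
      Matrix.cons_val_two, Matrix.cons_val_three, Matrix.cons_val_four, Matrix.tail_cons] <;>
    ring

private lemma sub3 (x : Fin 4 → ℂ) : (fun j => ∑ k, s 3 j k * x k) = ![1/2 * (x 0 - x 1 - x 2 - x 3), 1/2 * (-x 0 + x 1 - x 2 - x 3), 1/2 * (-x 0 - x 1 + x 2 - x 3), 1/2 * (-x 0 - x 1 - x 2 + x 3)] := by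
  funext j
  fin_cases j <;>
    simp [s, Fin.sum_univ_four, Matrix.cons_val_zero, Matrix.cons_val_one, Matrix.head_cons,
      Matrix.cons_val_two, Matrix.cons_val_three, Matrix.cons_val_four, Matrix.tail_cons] <;>
    ring

private lemma sub4 (x : Fin 4 → ℂ) : (fun j => ∑ k, s 4 j k * x k) = ![(-1-I)/2 * x 2 + (-1+I)/2 * x 3, x 1, (-1+I)/2 * x 0 + 1/2 * x 2 + I/2 * x 3, (-1-I)/2 * x 0 - I/2 * x 2 + 1/2 * x 3] := by
  funext j
  fin_cases j <;>
    simp [s, Fin.sum_univ_four, Matrix.cons_val_zero, Matrix.cons_val_one, Matrix.head_cons,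
      Matrix.cons_val_two, Matrix.cons_val_three, Matrix.cons_val_four, Matrix.tail_cons] <;>
    ring

set_option maxHeartbeats 1000000 in
private lemma actA_0_0 : act (s 0) (A 0) = A 2 := by
  refine MvPolynomial.funext fun x => ?_
  rw [eval_act, sub0, Aex0, Aex2]
  simp only [Matrix.cons_val_zero, Matrix.cons_val_one, Matrix.head_cons, Matrix.cons_val_two,
    Matrix.cons_val_three, Matrix.tail_cons, eval_add, eval_sub, eval_mul, eval_pow, eval_neg,
    eval_X, eval_C, eval_ofNat]
  ring_nf
  try simp only [I2, I3, I4, I5, I6, I7, I8]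
  try ring
  try ring_nf

set_option maxHeartbeats 1000000 in
private lemma actA_0_1 : act (s 0) (A 1) = A 1 := by
  refine MvPolynomial.funext fun x => ?_
  rw [eval_act, sub0, Aex1]
  simp only [Matrix.cons_val_zero, Matrix.cons_val_one, Matrix.head_cons, Matrix.cons_val_two,
    Matrix.cons_val_three, Matrix.tail_cons, eval_add, eval_sub, eval_mul, eval_pow, eval_neg,
    eval_X, eval_C, eval_ofNat]
  ring_nf
  try simp only [I2, I3, I4, I5, I6, I7, I8]
  try ring
  try ring_nf

set_option maxHeartbeats 1000000 in
private lemma actA_0_2 : act (s 0) (A 2) = A 0 := by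
  refine MvPolynomial.funext fun x => ?_
  rw [eval_act, sub0, Aex2, Aex0]
  simp only [Matrix.cons_val_zero, Matrix.cons_val_one, Matrix.head_cons, Matrix.cons_val_two,
    Matrix.cons_val_three, Matrix.tail_cons, eval_add, eval_sub, eval_mul, eval_pow, eval_neg,
    eval_X, eval_C, eval_ofNat]
  ring_nf
  try simp only [I2, I3, I4, I5, I6, I7, I8]
  try ring
  try ring_nf

set_option maxHeartbeats 1000000 in
private lemma actA_0_3 : act (s 0) (A 3) = A 3 := by
  refine MvPolynomial.funext fun x => ?_
  rw [eval_act, sub0, Aex3]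
  simp only [Matrix.cons_val_zero, Matrix.cons_val_one, Matrix.head_cons, Matrix.cons_val_two,
    Matrix.cons_val_three, Matrix.tail_cons, eval_add, eval_sub, eval_mul, eval_pow, eval_neg,
    eval_X, eval_C, eval_ofNat]
  ring_nf
  try simp only [I2, I3, I4, I5, I6, I7, I8]
  try ring
  try ring_nf

set_option maxHeartbeats 1000000 in
private lemma actA_0_4 : act (s 0) (A 4) = A 4 := by
  refine MvPolynomial.funext fun x => ?_
  rw [eval_act, sub0, Aex4]
  simp only [Matrix.cons_val_zero, Matrix.cons_val_one, Matrix.head_cons, Matrix.cons_val_two,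
    Matrix.cons_val_three, Matrix.tail_cons, eval_add, eval_sub, eval_mul, eval_pow, eval_neg,
    eval_X, eval_C, eval_ofNat]
  ring_nf
  try simp only [I2, I3, I4, I5, I6, I7, I8]
  try ring
  try ring_nf

set_option maxHeartbeats 1000000 in
private lemma actA_0_5 : act (s 0) (A 5) = A 5 := by
  refine MvPolynomial.funext fun x => ?_
  rw [eval_act, sub0, Aex5]
  simp only [Matrix.cons_val_zero, Matrix.cons_val_one, Matrix.head_cons, Matrix.cons_val_two,
    Matrix.cons_val_three, Matrix.tail_cons, eval_add, eval_sub, eval_mul, eval_pow, eval_neg,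
    eval_X, eval_C, eval_ofNat]
  ring_nf
  try simp only [I2, I3, I4, I5, I6, I7, I8]
  try ring
  try ring_nf

set_option maxHeartbeats 1000000 in
private lemma actA_1_0 : act (s 1) (A 0) = A 0 := by
  refine MvPolynomial.funext fun x => ?_
  rw [eval_act, sub1, Aex0]
  simp only [Matrix.cons_val_zero, Matrix.cons_val_one, Matrix.head_cons, Matrix.cons_val_two,
    Matrix.cons_val_three, Matrix.tail_cons, eval_add, eval_sub, eval_mul, eval_pow, eval_neg,
    eval_X, eval_C, eval_ofNat]
  ring_nf
  try simp only [I2, I3, I4, I5, I6, I7, I8]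
  try ring
  try ring_nf

set_option maxHeartbeats 1000000 in
private lemma actA_1_1 : act (s 1) (A 1) = A 1 := by
  refine MvPolynomial.funext fun x => ?_
  rw [eval_act, sub1, Aex1]
  simp only [Matrix.cons_val_zero, Matrix.cons_val_one, Matrix.head_cons, Matrix.cons_val_two,
    Matrix.cons_val_three, Matrix.tail_cons, eval_add, eval_sub, eval_mul, eval_pow, eval_neg,
    eval_X, eval_C, eval_ofNat]
  ring_nf
  try simp only [I2, I3, I4, I5, I6, I7, I8]
  try ring
  try ring_nf

set_option maxHeartbeats 1000000 in
private lemma actA_1_2 : act (s 1) (A 2) = A 2 := by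
  refine MvPolynomial.funext fun x => ?_
  rw [eval_act, sub1, Aex2]
  simp only [Matrix.cons_val_zero, Matrix.cons_val_one, Matrix.head_cons, Matrix.cons_val_two,
    Matrix.cons_val_three, Matrix.tail_cons, eval_add, eval_sub, eval_mul, eval_pow, eval_neg,
    eval_X, eval_C, eval_ofNat]
  ring_nf
  try simp only [I2, I3, I4, I5, I6, I7, I8]
  try ring
  try ring_nf

set_option maxHeartbeats 1000000 in
private lemma actA_1_3 : act (s 1) (A 3) = A 3 := by
  refine MvPolynomial.funext fun x => ?_
  rw [eval_act, sub1, Aex3]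
  simp only [Matrix.cons_val_zero, Matrix.cons_val_one, Matrix.head_cons, Matrix.cons_val_two,
    Matrix.cons_val_three, Matrix.tail_cons, eval_add, eval_sub, eval_mul, eval_pow, eval_neg,
    eval_X, eval_C, eval_ofNat]
  ring_nf
  try simp only [I2, I3, I4, I5, I6, I7, I8]
  try ring
  try ring_nf

set_option maxHeartbeats 1000000 in
private lemma actA_1_4 : act (s 1) (A 4) = A 5 := by
  refine MvPolynomial.funext fun x => ?_
  rw [eval_act, sub1, Aex4, Aex5]
  simp only [Matrix.cons_val_zero, Matrix.cons_val_one, Matrix.head_cons, Matrix.cons_val_two,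
    Matrix.cons_val_three, Matrix.tail_cons, eval_add, eval_sub, eval_mul, eval_pow, eval_neg,
    eval_X, eval_C, eval_ofNat]
  ring_nf
  try simp only [I2, I3, I4, I5, I6, I7, I8]
  try ring
  try ring_nf

set_option maxHeartbeats 1000000 in
private lemma actA_1_5 : act (s 1) (A 5) = A 4 := by
  refine MvPolynomial.funext fun x => ?_
  rw [eval_act, sub1, Aex5, Aex4]
  simp only [Matrix.cons_val_zero, Matrix.cons_val_one, Matrix.head_cons, Matrix.cons_val_two,
    Matrix.cons_val_three, Matrix.tail_cons, eval_add, eval_sub, eval_mul, eval_pow, eval_neg,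
    eval_X, eval_C, eval_ofNat]
  ring_nf
  try simp only [I2, I3, I4, I5, I6, I7, I8]
  try ring
  try ring_nf

set_option maxHeartbeats 1000000 in
private lemma actA_2_0 : act (s 2) (A 0) = A 0 := by
  refine MvPolynomial.funext fun x => ?_
  rw [eval_act, sub2, Aex0]
  simp only [Matrix.cons_val_zero, Matrix.cons_val_one, Matrix.head_cons, Matrix.cons_val_two,
    Matrix.cons_val_three, Matrix.tail_cons, eval_add, eval_sub, eval_mul, eval_pow, eval_neg,
    eval_X, eval_C, eval_ofNat]
  ring_nf
  try simp only [I2, I3, I4, I5, I6, I7, I8]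
  try ring
  try ring_nf

set_option maxHeartbeats 1000000 in
private lemma actA_2_1 : act (s 2) (A 1) = A 3 := by
  refine MvPolynomial.funext fun x => ?_
  rw [eval_act, sub2, Aex1, Aex3]
  simp only [Matrix.cons_val_zero, Matrix.cons_val_one, Matrix.head_cons, Matrix.cons_val_two,
    Matrix.cons_val_three, Matrix.tail_cons, eval_add, eval_sub, eval_mul, eval_pow, eval_neg,
    eval_X, eval_C, eval_ofNat]
  ring_nf
  try simp only [I2, I3, I4, I5, I6, I7, I8]
  try ring
  try ring_nf

set_option maxHeartbeats 1000000 in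
private lemma actA_2_2 : act (s 2) (A 2) = A 2 := by
  refine MvPolynomial.funext fun x => ?_
  rw [eval_act, sub2, Aex2]
  simp only [Matrix.cons_val_zero, Matrix.cons_val_one, Matrix.head_cons, Matrix.cons_val_two,
    Matrix.cons_val_three, Matrix.tail_cons, eval_add, eval_sub, eval_mul, eval_pow, eval_neg,
    eval_X, eval_C, eval_ofNat]
  ring_nf
  try simp only [I2, I3, I4, I5, I6, I7, I8]
  try ring
  try ring_nf

set_option maxHeartbeats 1000000 in
private lemma actA_2_3 : act (s 2) (A 3) = A 1 := by
  refine MvPolynomial.funext fun x => ?_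
  rw [eval_act, sub2, Aex3, Aex1]
  simp only [Matrix.cons_val_zero, Matrix.cons_val_one, Matrix.head_cons, Matrix.cons_val_two,
    Matrix.cons_val_three, Matrix.tail_cons, eval_add, eval_sub, eval_mul, eval_pow, eval_neg,
    eval_X, eval_C, eval_ofNat]
  ring_nf
  try simp only [I2, I3, I4, I5, I6, I7, I8]
  try ring
  try ring_nf

set_option maxHeartbeats 1000000 in
private lemma actA_2_4 : act (s 2) (A 4) = A 4 := by
  refine MvPolynomial.funext fun x => ?_
  rw [eval_act, sub2, Aex4]
  simp only [Matrix.cons_val_zero, Matrix.cons_val_one, Matrix.head_cons, Matrix.cons_val_two,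
    Matrix.cons_val_three, Matrix.tail_cons, eval_add, eval_sub, eval_mul, eval_pow, eval_neg,
    eval_X, eval_C, eval_ofNat]
  ring_nf
  try simp only [I2, I3, I4, I5, I6, I7, I8]
  try ring
  try ring_nf

set_option maxHeartbeats 1000000 in
private lemma actA_2_5 : act (s 2) (A 5) = A 5 := by
  refine MvPolynomial.funext fun x => ?_
  rw [eval_act, sub2, Aex5]
  simp only [Matrix.cons_val_zero, Matrix.cons_val_one, Matrix.head_cons, Matrix.cons_val_two,
    Matrix.cons_val_three, Matrix.tail_cons, eval_add, eval_sub, eval_mul, eval_pow, eval_neg,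
    eval_X, eval_C, eval_ofNat]
  ring_nf
  try simp only [I2, I3, I4, I5, I6, I7, I8]
  try ring
  try ring_nf

set_option maxHeartbeats 1000000 in
private lemma actA_3_0 : act (s 3) (A 0) = A 3 := by
  refine MvPolynomial.funext fun x => ?_
  rw [eval_act, sub3, Aex0, Aex3]
  simp only [Matrix.cons_val_zero, Matrix.cons_val_one, Matrix.head_cons, Matrix.cons_val_two,
    Matrix.cons_val_three, Matrix.tail_cons, eval_add, eval_sub, eval_mul, eval_pow, eval_neg,
    eval_X, eval_C, eval_ofNat]
  ring_nf
  try simp only [I2, I3, I4, I5, I6, I7, I8]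
  try ring
  try ring_nf

set_option maxHeartbeats 1000000 in
private lemma actA_3_1 : act (s 3) (A 1) = A 1 := by
  refine MvPolynomial.funext fun x => ?_
  rw [eval_act, sub3, Aex1]
  simp only [Matrix.cons_val_zero, Matrix.cons_val_one, Matrix.head_cons, Matrix.cons_val_two,
    Matrix.cons_val_three, Matrix.tail_cons, eval_add, eval_sub, eval_mul, eval_pow, eval_neg,
    eval_X, eval_C, eval_ofNat]
  ring_nf
  try simp only [I2, I3, I4, I5, I6, I7, I8]
  try ring
  try ring_nf

set_option maxHeartbeats 1000000 in
private lemma actA_3_2 : act (s 3) (A 2) = A 2 := by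
  refine MvPolynomial.funext fun x => ?_
  rw [eval_act, sub3, Aex2]
  simp only [Matrix.cons_val_zero, Matrix.cons_val_one, Matrix.head_cons, Matrix.cons_val_two,
    Matrix.cons_val_three, Matrix.tail_cons, eval_add, eval_sub, eval_mul, eval_pow, eval_neg,
    eval_X, eval_C, eval_ofNat]
  ring_nf
  try simp only [I2, I3, I4, I5, I6, I7, I8]
  try ring
  try ring_nf

set_option maxHeartbeats 1000000 in
private lemma actA_3_3 : act (s 3) (A 3) = A 0 := by
  refine MvPolynomial.funext fun x => ?_
  rw [eval_act, sub3, Aex3, Aex0]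
  simp only [Matrix.cons_val_zero, Matrix.cons_val_one, Matrix.head_cons, Matrix.cons_val_two,
    Matrix.cons_val_three, Matrix.tail_cons, eval_add, eval_sub, eval_mul, eval_pow, eval_neg,
    eval_X, eval_C, eval_ofNat]
  ring_nf
  try simp only [I2, I3, I4, I5, I6, I7, I8]
  try ring
  try ring_nf

set_option maxHeartbeats 1000000 in
private lemma actA_3_4 : act (s 3) (A 4) = A 4 := by
  refine MvPolynomial.funext fun x => ?_
  rw [eval_act, sub3, Aex4]
  simp only [Matrix.cons_val_zero, Matrix.cons_val_one, Matrix.head_cons, Matrix.cons_val_two,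
    Matrix.cons_val_three, Matrix.tail_cons, eval_add, eval_sub, eval_mul, eval_pow, eval_neg,
    eval_X, eval_C, eval_ofNat]
  ring_nf
  try simp only [I2, I3, I4, I5, I6, I7, I8]
  try ring
  try ring_nf

set_option maxHeartbeats 1000000 in
private lemma actA_3_5 : act (s 3) (A 5) = A 5 := by
  refine MvPolynomial.funext fun x => ?_
  rw [eval_act, sub3, Aex5]
  simp only [Matrix.cons_val_zero, Matrix.cons_val_one, Matrix.head_cons, Matrix.cons_val_two,
    Matrix.cons_val_three, Matrix.tail_cons, eval_add, eval_sub, eval_mul, eval_pow, eval_neg,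
    eval_X, eval_C, eval_ofNat]
  ring_nf
  try simp only [I2, I3, I4, I5, I6, I7, I8]
  try ring
  try ring_nf

set_option maxHeartbeats 1000000 in
private lemma actA_4_0 : act (s 4) (A 0) = A 0 := by
  refine MvPolynomial.funext fun x => ?_
  rw [eval_act, sub4, Aex0]
  simp only [Matrix.cons_val_zero, Matrix.cons_val_one, Matrix.head_cons, Matrix.cons_val_two,
    Matrix.cons_val_three, Matrix.tail_cons, eval_add, eval_sub, eval_mul, eval_pow, eval_neg,
    eval_X, eval_C, eval_ofNat]
  ring_nf
  try simp only [I2, I3, I4, I5, I6, I7, I8]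
  try ring
  try ring_nf

set_option maxHeartbeats 1000000 in
private lemma actA_4_1 : act (s 4) (A 1) = A 5 := by
  refine MvPolynomial.funext fun x => ?_
  rw [eval_act, sub4, Aex1, Aex5]
  simp only [Matrix.cons_val_zero, Matrix.cons_val_one, Matrix.head_cons, Matrix.cons_val_two,
    Matrix.cons_val_three, Matrix.tail_cons, eval_add, eval_sub, eval_mul, eval_pow, eval_neg,
    eval_X, eval_C, eval_ofNat]
  ring_nf
  try simp only [I2, I3, I4, I5, I6, I7, I8]
  try ring
  try ring_nf

set_option maxHeartbeats 1000000 in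
private lemma actA_4_2 : act (s 4) (A 2) = A 2 := by
  refine MvPolynomial.funext fun x => ?_
  rw [eval_act, sub4, Aex2]
  simp only [Matrix.cons_val_zero, Matrix.cons_val_one, Matrix.head_cons, Matrix.cons_val_two,
    Matrix.cons_val_three, Matrix.tail_cons, eval_add, eval_sub, eval_mul, eval_pow, eval_neg,
    eval_X, eval_C, eval_ofNat]
  ring_nf
  try simp only [I2, I3, I4, I5, I6, I7, I8]
  try ring
  try ring_nf

set_option maxHeartbeats 1000000 in
private lemma actA_4_3 : act (s 4) (A 3) = A 3 := by
  refine MvPolynomial.funext fun x => ?_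
  rw [eval_act, sub4, Aex3]
  simp only [Matrix.cons_val_zero, Matrix.cons_val_one, Matrix.head_cons, Matrix.cons_val_two,
    Matrix.cons_val_three, Matrix.tail_cons, eval_add, eval_sub, eval_mul, eval_pow, eval_neg,
    eval_X, eval_C, eval_ofNat]
  ring_nf
  try simp only [I2, I3, I4, I5, I6, I7, I8]
  try ring
  try ring_nf

set_option maxHeartbeats 1000000 in
private lemma actA_4_4 : act (s 4) (A 4) = A 4 := by
  refine MvPolynomial.funext fun x => ?_
  rw [eval_act, sub4, Aex4]
  simp only [Matrix.cons_val_zero, Matrix.cons_val_one, Matrix.head_cons, Matrix.cons_val_two,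
    Matrix.cons_val_three, Matrix.tail_cons, eval_add, eval_sub, eval_mul, eval_pow, eval_neg,
    eval_X, eval_C, eval_ofNat]
  ring_nf
  try simp only [I2, I3, I4, I5, I6, I7, I8]
  try ring
  try ring_nf

set_option maxHeartbeats 1000000 in
private lemma actA_4_5 : act (s 4) (A 5) = A 1 := by
  refine MvPolynomial.funext fun x => ?_
  rw [eval_act, sub4, Aex5, Aex1]
  simp only [Matrix.cons_val_zero, Matrix.cons_val_one, Matrix.head_cons, Matrix.cons_val_two,
    Matrix.cons_val_three, Matrix.tail_cons, eval_add, eval_sub, eval_mul, eval_pow, eval_neg,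
    eval_X, eval_C, eval_ofNat]
  ring_nf
  try simp only [I2, I3, I4, I5, I6, I7, I8]
  try ring
  try ring_nf

private lemma hperm0 : ∀ j, act (s 0) (A j) = A (Equiv.swap 0 2 j) := by
  intro j
  fin_cases j
  · exact actA_0_0
  · exact actA_0_1
  · exact actA_0_2
  · exact actA_0_3
  · exact actA_0_4
  · exact actA_0_5

private lemma hperm1 : ∀ j, act (s 1) (A j) = A (Equiv.swap 4 5 j) := by
  intro j
  fin_cases j
  · exact actA_1_0
  · exact actA_1_1
  · exact actA_1_2
  · exact actA_1_3
  · exact actA_1_4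
  · exact actA_1_5

private lemma hperm2 : ∀ j, act (s 2) (A j) = A (Equiv.swap 1 3 j) := by
  intro j
  fin_cases j
  · exact actA_2_0
  · exact actA_2_1
  · exact actA_2_2
  · exact actA_2_3
  · exact actA_2_4
  · exact actA_2_5

private lemma hperm3 : ∀ j, act (s 3) (A j) = A (Equiv.swap 0 3 j) := by
  intro j
  fin_cases j
  · exact actA_3_0
  · exact actA_3_1
  · exact actA_3_2
  · exact actA_3_3
  · exact actA_3_4
  · exact actA_3_5

private lemma hperm4 : ∀ j, act (s 4) (A j) = A (Equiv.swap 1 5 j) := by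
  intro j
  fin_cases j
  · exact actA_4_0
  · exact actA_4_1
  · exact actA_4_2
  · exact actA_4_3
  · exact actA_4_4
  · exact actA_4_5

lemma act_sigma (g : Matrix (Fin 4) (Fin 4) ℂ) (π : Equiv.Perm (Fin 6))
    (h : ∀ j, act g (A j) = A (π j)) (k : ℕ) : act g (σ k) = σ k := by
  unfold σ
  unfold act at h ⊢
  rw [map_sum]
  have step : ∀ t ∈ Finset.powersetCard k (Finset.univ : Finset (Fin 6)),
      (aeval fun j => ∑ l, C (g j l) * X l) (∏ j ∈ t, A j) = ∏ j ∈ t, A (π j) := by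
    intro t _
    rw [map_prod]
    exact Finset.prod_congr rfl fun j _ => h j
  rw [Finset.sum_congr rfl step,
    ← Finset.esymm_map_val (fun j => A (π j)) Finset.univ k,
    ← Finset.esymm_map_val A Finset.univ k]
  congr 1
  calc Finset.univ.val.map (fun j => A (π j))
      = (Finset.univ.val.map ⇑π).map A := by rw [Multiset.map_map]; rfl
    _ = ((Finset.univ.map π.toEmbedding).val).map A := by
        rw [Finset.map_val]; rfl
    _ = Finset.univ.val.map A := by rw [Finset.map_univ_equiv]

/-- For every k ∈ {1,…,6}, σ_k is invariant under every element of the subgroup of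
    GL(4,ℂ) generated by s₁,…,s₅. -/
theorem stmt6 :
    ∀ k : ℕ, 1 ≤ k → k ≤ 6 →
    ∀ S : Fin 5 → Matrix.GeneralLinearGroup (Fin 4) ℂ,
      (∀ m, ((S m : Matrix.GeneralLinearGroup (Fin 4) ℂ) : Matrix (Fin 4) (Fin 4) ℂ) = s m) →
      ∀ g ∈ Subgroup.closure (Set.range S),
        act ((g : Matrix.GeneralLinearGroup (Fin 4) ℂ) : Matrix (Fin 4) (Fin 4) ℂ) (σ k) = σ k := by
  intro k _ _ S hS g hg
  have key : ∀ m : Fin 5, act (s m) (σ k) = σ k := by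
    intro m
    fin_cases m
    · exact act_sigma _ _ hperm0 k
    · exact act_sigma _ _ hperm1 k
    · exact act_sigma _ _ hperm2 k
    · exact act_sigma _ _ hperm3 k
    · exact act_sigma _ _ hperm4 k
  refine Subgroup.closure_induction
    (p := fun h _ => act ((h : Matrix.GeneralLinearGroup (Fin 4) ℂ) :
      Matrix (Fin 4) (Fin 4) ℂ) (σ k) = σ k) ?_ ?_ ?_ ?_ hg
  · rintro x ⟨m, rfl⟩
    rw [hS m]
    exact key m
  · show act ((1 : Matrix.GeneralLinearGroup (Fin 4) ℂ) : Matrix (Fin 4) (Fin 4) ℂ) (σ k) = σ k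
    rw [Units.val_one, act_one]
  · intro x y _ _ px py
    rw [Units.val_mul, ← act_act, px, py]
  · intro x _ px
    have h1 : act (((x⁻¹ : Matrix.GeneralLinearGroup (Fin 4) ℂ) : Matrix (Fin 4) (Fin 4) ℂ))
        (act ((x : Matrix.GeneralLinearGroup (Fin 4) ℂ) : Matrix (Fin 4) (Fin 4) ℂ) (σ k))
        = σ k := by
      rw [act_act, ← Units.val_mul, mul_inv_cancel, Units.val_one, act_one]
    rw [px] at h1
    exact h1
end

section
/- Define s = s₁s₅s₃s₄s₃s₅s₁, t = s₄, u = s₂s₁s₅s₁s₂, v = s₁, w = s₄s₂s₃s₅s₄s₅s₃s₂s₄ in GL(4,ℂ). Then s, t, u, v, w are involutions (each squares to the identity) and satisfy the relations sw = ws, uv = vu, svs = vsv, vtv = tvt, wtw = twt, wuw = uwu and stu = tus = ust; these are the defining relations of the Shephard–Todd presentation of the complex reflection group G₃₁. -/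
open Complex Matrix MvPolynomial

theorem mul_fin_four {α} [NonUnitalNonAssocSemiring α]
    (a₁₁ a₁₂ a₁₃ a₁₄ a₂₁ a₂₂ a₂₃ a₂₄ a₃₁ a₃₂ a₃₃ a₃₄ a₄₁ a₄₂ a₄₃ a₄₄
     b₁₁ b₁₂ b₁₃ b₁₄ b₂₁ b₂₂ b₂₃ b₂₄ b₃₁ b₃₂ b₃₃ b₃₄ b₄₁ b₄₂ b₄₃ b₄₄ : α) :
    !![a₁₁, a₁₂, a₁₃, a₁₄; a₂₁, a₂₂, a₂₃, a₂₄; a₃₁, a₃₂, a₃₃, a₃₄; a₄₁, a₄₂, a₄₃, a₄₄] *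
    !![b₁₁, b₁₂, b₁₃, b₁₄; b₂₁, b₂₂, b₂₃, b₂₄; b₃₁, b₃₂, b₃₃, b₃₄; b₄₁, b₄₂, b₄₃, b₄₄] =
    !![a₁₁*b₁₁ + a₁₂*b₂₁ + a₁₃*b₃₁ + a₁₄*b₄₁, a₁₁*b₁₂ + a₁₂*b₂₂ + a₁₃*b₃₂ + a₁₄*b₄₂, a₁₁*b₁₃ + a₁₂*b₂₃ + a₁₃*b₃₃ + a₁₄*b₄₃, a₁₁*b₁₄ + a₁₂*b₂₄ + a₁₃*b₃₄ + a₁₄*b₄₄;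
       a₂₁*b₁₁ + a₂₂*b₂₁ + a₂₃*b₃₁ + a₂₄*b₄₁, a₂₁*b₁₂ + a₂₂*b₂₂ + a₂₃*b₃₂ + a₂₄*b₄₂, a₂₁*b₁₃ + a₂₂*b₂₃ + a₂₃*b₃₃ + a₂₄*b₄₃, a₂₁*b₁₄ + a₂₂*b₂₄ + a₂₃*b₃₄ + a₂₄*b₄₄;
       a₃₁*b₁₁ + a₃₂*b₂₁ + a₃₃*b₃₁ + a₃₄*b₄₁, a₃₁*b₁₂ + a₃₂*b₂₂ + a₃₃*b₃₂ + a₃₄*b₄₂, a₃₁*b₁₃ + a₃₂*b₂₃ + a₃₃*b₃₃ + a₃₄*b₄₃, a₃₁*b₁₄ + a₃₂*b₂₄ + a₃₃*b₃₄ + a₃₄*b₄₄;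
       a₄₁*b₁₁ + a₄₂*b₂₁ + a₄₃*b₃₁ + a₄₄*b₄₁, a₄₁*b₁₂ + a₄₂*b₂₂ + a₄₃*b₃₂ + a₄₄*b₄₂, a₄₁*b₁₃ + a₄₂*b₂₃ + a₄₃*b₃₃ + a₄₄*b₄₃, a₄₁*b₁₄ + a₄₂*b₂₄ + a₄₃*b₃₄ + a₄₄*b₄₄] := by
  ext i j
  fin_cases i <;> fin_cases j
    <;> simp [Matrix.mul_apply, Fin.sum_univ_four, Matrix.vecHead, Matrix.vecTail]

theorem mat4_eq {α} {a₁₁ a₁₂ a₁₃ a₁₄ a₂₁ a₂₂ a₂₃ a₂₄ a₃₁ a₃₂ a₃₃ a₃₄ a₄₁ a₄₂ a₄₃ a₄₄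
     b₁₁ b₁₂ b₁₃ b₁₄ b₂₁ b₂₂ b₂₃ b₂₄ b₃₁ b₃₂ b₃₃ b₃₄ b₄₁ b₄₂ b₄₃ b₄₄ : α}
    (h₁₁ : a₁₁ = b₁₁) (h₁₂ : a₁₂ = b₁₂) (h₁₃ : a₁₃ = b₁₃) (h₁₄ : a₁₄ = b₁₄)
    (h₂₁ : a₂₁ = b₂₁) (h₂₂ : a₂₂ = b₂₂) (h₂₃ : a₂₃ = b₂₃) (h₂₄ : a₂₄ = b₂₄)
    (h₃₁ : a₃₁ = b₃₁) (h₃₂ : a₃₂ = b₃₂) (h₃₃ : a₃₃ = b₃₃) (h₃₄ : a₃₄ = b₃₄)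
    (h₄₁ : a₄₁ = b₄₁) (h₄₂ : a₄₂ = b₄₂) (h₄₃ : a₄₃ = b₄₃) (h₄₄ : a₄₄ = b₄₄) :
    !![a₁₁, a₁₂, a₁₃, a₁₄; a₂₁, a₂₂, a₂₃, a₂₄; a₃₁, a₃₂, a₃₃, a₃₄; a₄₁, a₄₂, a₄₃, a₄₄] =
    !![b₁₁, b₁₂, b₁₃, b₁₄; b₂₁, b₂₂, b₂₃, b₂₄; b₃₁, b₃₂, b₃₃, b₃₄; b₄₁, b₄₂, b₄₃, b₄₄] := by
  subst_vars; rfl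

theorem one_fin_four {α} [Zero α] [One α] :
    (1 : Matrix (Fin 4) (Fin 4) α) = !![1,0,0,0; 0,1,0,0; 0,0,1,0; 0,0,0,1] := by
  ext i j
  fin_cases i <;> fin_cases j <;> simp [Matrix.one_apply, Matrix.vecHead, Matrix.vecTail]


noncomputable def M0 : Matrix (Fin 4) (Fin 4) ℂ :=
  !![(-1),  (0),  (0),  (0);
    (0),  (1),  (0),  (0);
    (0),  (0),  (1),  (0);
    (0),  (0),  (0),  (1)]

noncomputable def M1 : Matrix (Fin 4) (Fin 4) ℂ :=
  !![(0),  (-1),  (0),  (0);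
    (-1),  (0),  (0),  (0);
    (0),  (0),  (1),  (0);
    (0),  (0),  (0),  (1)]

noncomputable def M2 : Matrix (Fin 4) (Fin 4) ℂ :=
  !![(0),  ((-1)*I),  (0),  (0);
    ((1)*I),  (0),  (0),  (0);
    (0),  (0),  (1),  (0);
    (0),  (0),  (0),  (1)]

noncomputable def M3 : Matrix (Fin 4) (Fin 4) ℂ :=
  !![(1/2),  (-1/2),  (-1/2),  (-1/2);
    (-1/2),  (1/2),  (-1/2),  (-1/2);
    (-1/2),  (-1/2),  (1/2),  (-1/2);
    (-1/2),  (-1/2),  (-1/2),  (1/2)]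

noncomputable def M4 : Matrix (Fin 4) (Fin 4) ℂ :=
  !![(0),  (0),  ((-1/2) + (-1/2)*I),  ((-1/2) + (1/2)*I);
    (0),  (1),  (0),  (0);
    ((-1/2) + (1/2)*I),  (0),  (1/2),  ((1/2)*I);
    ((-1/2) + (-1/2)*I),  (0),  ((-1/2)*I),  (1/2)]

noncomputable def M5 : Matrix (Fin 4) (Fin 4) ℂ :=
  !![(0),  (0),  ((1/2) + (1/2)*I),  ((1/2) + (-1/2)*I);
    (0),  (1),  (0),  (0);
    ((-1/2) + (1/2)*I),  (0),  (1/2),  ((1/2)*I);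
    ((-1/2) + (-1/2)*I),  (0),  ((-1/2)*I),  (1/2)]

noncomputable def M6 : Matrix (Fin 4) (Fin 4) ℂ :=
  !![(0),  (0),  ((1/2) + (1/2)*I),  ((1/2) + (-1/2)*I);
    ((1)*I),  (0),  (0),  (0);
    (0),  ((1/2) + (1/2)*I),  (1/2),  ((1/2)*I);
    (0),  ((-1/2) + (1/2)*I),  ((-1/2)*I),  (1/2)]

noncomputable def M7 : Matrix (Fin 4) (Fin 4) ℂ :=
  !![(-1/2),  (-1/2),  ((1/2)*I),  ((-1/2)*I);
    ((1/2)*I),  ((-1/2)*I),  ((-1/2)*I),  ((-1/2)*I);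
    ((-1/2) + (-1/2)*I),  (0),  ((-1/2)*I),  (-1/2);
    (0),  ((-1/2) + (1/2)*I),  ((-1/2)*I),  (1/2)]

noncomputable def M8 : Matrix (Fin 4) (Fin 4) ℂ :=
  !![((-1/2)*I),  ((1/2)*I),  ((1/2)*I),  ((-1/2)*I);
    (1/2),  (1/2),  ((-1/2)*I),  ((-1/2)*I);
    (0),  ((-1/2) + (1/2)*I),  ((-1/2)*I),  (-1/2);
    ((-1/2) + (-1/2)*I),  (0),  ((-1/2)*I),  (1/2)]

noncomputable def M9 : Matrix (Fin 4) (Fin 4) ℂ :=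
  !![(-1/2),  ((1/2)*I),  ((-1/2) + (1/2)*I),  (0);
    ((1/2)*I),  (1/2),  ((-1/2) + (-1/2)*I),  (0);
    ((1/2) + (1/2)*I),  ((-1/2) + (1/2)*I),  (0),  (0);
    (0),  (0),  (0),  (1)]

noncomputable def M10 : Matrix (Fin 4) (Fin 4) ℂ :=
  !![(1/2),  ((1/2)*I),  ((-1/2) + (1/2)*I),  (0);
    ((-1/2)*I),  (1/2),  ((-1/2) + (-1/2)*I),  (0);
    ((-1/2) + (-1/2)*I),  ((-1/2) + (1/2)*I),  (0),  (0);
    (0),  (0),  (0),  (1)]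

noncomputable def M11 : Matrix (Fin 4) (Fin 4) ℂ :=
  !![(0),  (-1),  (0),  (0);
    (1),  (0),  (0),  (0);
    (0),  (0),  (1),  (0);
    (0),  (0),  (0),  (1)]

noncomputable def M12 : Matrix (Fin 4) (Fin 4) ℂ :=
  !![(0),  (-1),  (0),  (0);
    (0),  (0),  ((-1/2) + (-1/2)*I),  ((-1/2) + (1/2)*I);
    ((-1/2) + (1/2)*I),  (0),  (1/2),  ((1/2)*I);
    ((-1/2) + (-1/2)*I),  (0),  ((-1/2)*I),  (1/2)]

noncomputable def M13 : Matrix (Fin 4) (Fin 4) ℂ :=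
  !![(0),  (-1),  (0),  (0);
    (0),  (0),  ((-1/2) + (-1/2)*I),  ((-1/2) + (1/2)*I);
    ((1/2) + (-1/2)*I),  (0),  (1/2),  ((1/2)*I);
    ((1/2) + (1/2)*I),  (0),  ((-1/2)*I),  (1/2)]

noncomputable def M14 : Matrix (Fin 4) (Fin 4) ℂ :=
  !![(1),  (0),  (0),  (0);
    (0),  (0),  ((-1/2) + (-1/2)*I),  ((-1/2) + (1/2)*I);
    (0),  ((-1/2) + (1/2)*I),  (1/2),  ((1/2)*I);
    (0),  ((-1/2) + (-1/2)*I),  ((-1/2)*I),  (1/2)]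

noncomputable def M15 : Matrix (Fin 4) (Fin 4) ℂ :=
  !![(1/2),  (-1/2),  (-1/2),  (-1/2);
    (-1/2),  (1/2),  (-1/2),  (-1/2);
    (1/2),  (1/2),  (1/2),  (-1/2);
    (1/2),  (1/2),  (-1/2),  (1/2)]

noncomputable def M16 : Matrix (Fin 4) (Fin 4) ℂ :=
  !![((-1/2)*I),  ((-1/2)*I),  (-1/2),  (-1/2);
    ((1/2)*I),  ((1/2)*I),  (-1/2),  (-1/2);
    ((1/2)*I),  ((-1/2)*I),  (1/2),  (-1/2);
    ((1/2)*I),  ((-1/2)*I),  (-1/2),  (1/2)]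

noncomputable def M17 : Matrix (Fin 4) (Fin 4) ℂ :=
  !![(1/2),  ((-1/2)*I),  ((-1/2) + (1/2)*I),  (0);
    (1/2),  ((1/2)*I),  (0),  ((-1/2) + (-1/2)*I);
    ((1/2)*I),  ((-1/2)*I),  (1/2),  (-1/2);
    ((-1/2)*I),  ((-1/2)*I),  ((-1/2)*I),  ((-1/2)*I)]

noncomputable def M18 : Matrix (Fin 4) (Fin 4) ℂ :=
  !![(1/2),  ((-1/2)*I),  ((-1/2) + (1/2)*I),  (0);
    (1/2),  ((1/2)*I),  (0),  ((-1/2) + (-1/2)*I);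
    ((1/2)*I),  ((-1/2)*I),  (1/2),  (-1/2);
    ((1/2)*I),  ((1/2)*I),  ((1/2)*I),  ((1/2)*I)]

noncomputable def M19 : Matrix (Fin 4) (Fin 4) ℂ :=
  !![((-1/2)*I),  ((-1/2)*I),  (-1/2),  (-1/2);
    ((1/2)*I),  ((1/2)*I),  (-1/2),  (-1/2);
    ((1/2)*I),  ((-1/2)*I),  (1/2),  (-1/2);
    ((-1/2)*I),  ((1/2)*I),  (1/2),  (-1/2)]

noncomputable def M20 : Matrix (Fin 4) (Fin 4) ℂ :=
  !![(1/2),  (-1/2),  (-1/2),  (-1/2);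
    (-1/2),  (1/2),  (-1/2),  (-1/2);
    (1/2),  (1/2),  (1/2),  (-1/2);
    (-1/2),  (-1/2),  (1/2),  (-1/2)]

noncomputable def M21 : Matrix (Fin 4) (Fin 4) ℂ :=
  !![(1/2),  (-1/2),  (-1/2),  (-1/2);
    (-1/2),  (1/2),  (-1/2),  (-1/2);
    (-1/2),  (-1/2),  (1/2),  (-1/2);
    (1/2),  (1/2),  (1/2),  (-1/2)]

noncomputable def M22 : Matrix (Fin 4) (Fin 4) ℂ :=
  !![(1),  (0),  (0),  (0);
    (0),  (1),  (0),  (0);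
    (0),  (0),  (1),  (0);
    (0),  (0),  (0),  (-1)]

noncomputable def M23 : Matrix (Fin 4) (Fin 4) ℂ :=
  !![(1),  (0),  (0),  (0);
    (0),  (1),  (0),  (0);
    (0),  (0),  (1),  (0);
    (0),  (0),  (0),  (1)]

noncomputable def M24 : Matrix (Fin 4) (Fin 4) ℂ :=
  !![(1/2),  ((1/2)*I),  ((-1/2) + (1/2)*I),  (0);
    ((-1/2)*I),  (1/2),  ((-1/2) + (-1/2)*I),  (0);
    ((-1/2) + (-1/2)*I),  ((-1/2) + (1/2)*I),  (0),  (0);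
    (0),  (0),  (0),  (-1)]

noncomputable def M25 : Matrix (Fin 4) (Fin 4) ℂ :=
  !![(-1),  (0),  (0),  (0);
    (0),  (0),  ((-1/2) + (-1/2)*I),  ((-1/2) + (1/2)*I);
    (0),  ((-1/2) + (1/2)*I),  (1/2),  ((1/2)*I);
    (0),  ((-1/2) + (-1/2)*I),  ((-1/2)*I),  (1/2)]

noncomputable def M26 : Matrix (Fin 4) (Fin 4) ℂ :=
  !![(1/2),  ((-1/2)*I),  ((1/2) + (-1/2)*I),  (0);
    ((1/2)*I),  (1/2),  ((-1/2) + (-1/2)*I),  (0);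
    ((1/2) + (1/2)*I),  ((-1/2) + (1/2)*I),  (0),  (0);
    (0),  (0),  (0),  (1)]

noncomputable def M27 : Matrix (Fin 4) (Fin 4) ℂ :=
  !![(-1/2),  ((-1/2)*I),  ((1/2) + (-1/2)*I),  (0);
    ((-1/2)*I),  (1/2),  ((-1/2) + (-1/2)*I),  (0);
    ((-1/2) + (-1/2)*I),  ((-1/2) + (1/2)*I),  (0),  (0);
    (0),  (0),  (0),  (1)]

noncomputable def M28 : Matrix (Fin 4) (Fin 4) ℂ :=
  !![(-1/2),  (1/2),  (1/2),  (1/2);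
    (-1/2),  (1/2),  (-1/2),  (-1/2);
    (-1/2),  (-1/2),  (1/2),  (-1/2);
    (-1/2),  (-1/2),  (-1/2),  (1/2)]

noncomputable def M29 : Matrix (Fin 4) (Fin 4) ℂ :=
  !![(1/2),  (1/2),  (1/2),  (1/2);
    (1/2),  (1/2),  (-1/2),  (-1/2);
    (1/2),  (-1/2),  (1/2),  (-1/2);
    (1/2),  (-1/2),  (-1/2),  (1/2)]

noncomputable def M30 : Matrix (Fin 4) (Fin 4) ℂ :=
  !![(-1/2),  (-1/2),  (-1/2),  (-1/2);
    (1/2),  (1/2),  (-1/2),  (-1/2);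
    (1/2),  (-1/2),  (1/2),  (-1/2);
    (1/2),  (-1/2),  (-1/2),  (1/2)]

noncomputable def M31 : Matrix (Fin 4) (Fin 4) ℂ :=
  !![(1/2),  (-1/2),  (-1/2),  (1/2);
    (-1/2),  (1/2),  (-1/2),  (1/2);
    (-1/2),  (-1/2),  (1/2),  (1/2);
    (1/2),  (1/2),  (1/2),  (1/2)]

noncomputable def M32 : Matrix (Fin 4) (Fin 4) ℂ :=
  !![(1/2),  (-1/2),  (-1/2),  (1/2);
    (-1/2),  (1/2),  (-1/2),  (1/2);
    (-1/2),  (-1/2),  (1/2),  (1/2);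
    (-1/2),  (-1/2),  (-1/2),  (-1/2)]

noncomputable def M33 : Matrix (Fin 4) (Fin 4) ℂ :=
  !![(1),  (0),  (0),  (0);
    (0),  (0),  ((-1/2) + (-1/2)*I),  ((-1/2) + (1/2)*I);
    (0),  ((-1/2) + (1/2)*I),  (1/2),  ((1/2)*I);
    (0),  ((1/2) + (1/2)*I),  ((1/2)*I),  (-1/2)]

noncomputable def M34 : Matrix (Fin 4) (Fin 4) ℂ :=
  !![(1),  (0),  (0),  (0);
    (0),  (0),  ((-1/2) + (-1/2)*I),  ((1/2) + (-1/2)*I);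
    (0),  ((-1/2) + (1/2)*I),  (1/2),  ((-1/2)*I);
    (0),  ((1/2) + (1/2)*I),  ((1/2)*I),  (1/2)]

noncomputable def M35 : Matrix (Fin 4) (Fin 4) ℂ :=
  !![(1),  (0),  (0),  (0);
    (0),  (0),  ((-1/2) + (-1/2)*I),  ((1/2) + (-1/2)*I);
    (0),  ((-1/2) + (1/2)*I),  (1/2),  ((-1/2)*I);
    (0),  ((-1/2) + (-1/2)*I),  ((-1/2)*I),  (-1/2)]

noncomputable def M36 : Matrix (Fin 4) (Fin 4) ℂ :=
  !![((1/2) + (-1/2)*I),  (0),  (-1/2),  ((-1/2)*I);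
    (0),  ((1/2) + (1/2)*I),  (-1/2),  ((1/2)*I);
    ((-1/2)*I),  ((1/2)*I),  (1/2),  (1/2);
    (-1/2),  (-1/2),  (-1/2),  (1/2)]

noncomputable def M37 : Matrix (Fin 4) (Fin 4) ℂ :=
  !![((1/2) + (-1/2)*I),  (0),  (-1/2),  ((-1/2)*I);
    (0),  ((1/2) + (-1/2)*I),  ((-1/2)*I),  (-1/2);
    ((-1/2)*I),  (-1/2),  ((1/2) + (-1/2)*I),  (0);
    (-1/2),  ((-1/2)*I),  (0),  ((1/2) + (-1/2)*I)]

noncomputable def M38 : Matrix (Fin 4) (Fin 4) ℂ :=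
  !![(1/2),  (1/2),  ((1/2)*I),  ((-1/2)*I);
    (-1/2),  (1/2),  (-1/2),  (-1/2);
    (-1/2),  ((1/2)*I),  ((1/2) + (1/2)*I),  (0);
    (-1/2),  ((-1/2)*I),  (0),  ((1/2) + (-1/2)*I)]

noncomputable def M39 : Matrix (Fin 4) (Fin 4) ℂ :=
  !![(1/2),  ((1/2)*I),  ((-1/2) + (1/2)*I),  (0);
    ((1/2)*I),  (1/2),  (0),  ((-1/2) + (1/2)*I);
    (0),  ((-1/2) + (1/2)*I),  (1/2),  ((1/2)*I);
    ((-1/2) + (1/2)*I),  (0),  ((1/2)*I),  (1/2)]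


lemma sg0 : s 0 = M0 := by
  show _ = _
  ext i j
  fin_cases i <;> fin_cases j <;> simp [s, M0, M1, M2, M3, M4, Matrix.vecHead, Matrix.vecTail] <;> ring_nf
lemma sg1 : s 1 = M1 := by
  show _ = _
  ext i j
  fin_cases i <;> fin_cases j <;> simp [s, M0, M1, M2, M3, M4, Matrix.vecHead, Matrix.vecTail] <;> ring_nf
lemma sg2 : s 2 = M2 := by
  show _ = _
  ext i j
  fin_cases i <;> fin_cases j <;> simp [s, M0, M1, M2, M3, M4, Matrix.vecHead, Matrix.vecTail] <;> ring_nf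
lemma sg3 : s 3 = M3 := by
  show _ = _
  ext i j
  fin_cases i <;> fin_cases j <;> simp [s, M0, M1, M2, M3, M4, Matrix.vecHead, Matrix.vecTail] <;> ring_nf
lemma sg4 : s 4 = M4 := by
  show _ = _
  ext i j
  fin_cases i <;> fin_cases j <;> simp [s, M0, M1, M2, M3, M4, Matrix.vecHead, Matrix.vecTail] <;> ring_nf


lemma h0 : M0 * M4 = M5 := by
  rw [M0, M4, mul_fin_four, M5]
  apply mat4_eq <;> norm_num [Complex.ext_iff]
lemma h1 : M5 * M2 = M6 := by
  rw [M5, M2, mul_fin_four, M6]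
  apply mat4_eq <;> norm_num [Complex.ext_iff]
lemma h2 : M6 * M3 = M7 := by
  rw [M6, M3, mul_fin_four, M7]
  apply mat4_eq <;> norm_num [Complex.ext_iff]
lemma h3 : M7 * M2 = M8 := by
  rw [M7, M2, mul_fin_four, M8]
  apply mat4_eq <;> norm_num [Complex.ext_iff]
lemma h4 : M8 * M4 = M9 := by
  rw [M8, M4, mul_fin_four, M9]
  apply mat4_eq <;> norm_num [Complex.ext_iff]
lemma h5 : M9 * M0 = M10 := by
  rw [M9, M0, mul_fin_four, M10]
  apply mat4_eq <;> norm_num [Complex.ext_iff]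
lemma h6 : M1 * M0 = M11 := by
  rw [M1, M0, mul_fin_four, M11]
  apply mat4_eq <;> norm_num [Complex.ext_iff]
lemma h7 : M11 * M4 = M12 := by
  rw [M11, M4, mul_fin_four, M12]
  apply mat4_eq <;> norm_num [Complex.ext_iff]
lemma h8 : M12 * M0 = M13 := by
  rw [M12, M0, mul_fin_four, M13]
  apply mat4_eq <;> norm_num [Complex.ext_iff]
lemma h9 : M13 * M1 = M14 := by
  rw [M13, M1, mul_fin_four, M14]
  apply mat4_eq <;> norm_num [Complex.ext_iff]
lemma h10 : M3 * M1 = M15 := by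
  rw [M3, M1, mul_fin_four, M15]
  apply mat4_eq <;> norm_num [Complex.ext_iff]
lemma h11 : M15 * M2 = M16 := by
  rw [M15, M2, mul_fin_four, M16]
  apply mat4_eq <;> norm_num [Complex.ext_iff]
lemma h12 : M16 * M4 = M17 := by
  rw [M16, M4, mul_fin_four, M17]
  apply mat4_eq <;> norm_num [Complex.ext_iff]
lemma h13 : M17 * M3 = M18 := by
  rw [M17, M3, mul_fin_four, M18]
  apply mat4_eq <;> norm_num [Complex.ext_iff]
lemma h14 : M18 * M4 = M19 := by
  rw [M18, M4, mul_fin_four, M19]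
  apply mat4_eq <;> norm_num [Complex.ext_iff]
lemma h15 : M19 * M2 = M20 := by
  rw [M19, M2, mul_fin_four, M20]
  apply mat4_eq <;> norm_num [Complex.ext_iff]
lemma h16 : M20 * M1 = M21 := by
  rw [M20, M1, mul_fin_four, M21]
  apply mat4_eq <;> norm_num [Complex.ext_iff]
lemma h17 : M21 * M3 = M22 := by
  rw [M21, M3, mul_fin_four, M22]
  apply mat4_eq <;> norm_num [Complex.ext_iff]
lemma h18 : M10 * M10 = 1 := by
  rw [M10, mul_fin_four, one_fin_four]
  apply mat4_eq <;> norm_num [Complex.ext_iff]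
lemma h19 : M3 * M3 = 1 := by
  rw [M3, mul_fin_four, one_fin_four]
  apply mat4_eq <;> norm_num [Complex.ext_iff]
lemma h20 : M14 * M14 = 1 := by
  rw [M14, mul_fin_four, one_fin_four]
  apply mat4_eq <;> norm_num [Complex.ext_iff]
lemma h21 : M0 * M0 = 1 := by
  rw [M0, mul_fin_four, one_fin_four]
  apply mat4_eq <;> norm_num [Complex.ext_iff]
lemma h22 : M22 * M22 = 1 := by
  rw [M22, mul_fin_four, one_fin_four]
  apply mat4_eq <;> norm_num [Complex.ext_iff]
lemma h23 : M10 * M22 = M24 := by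
  rw [M10, M22, mul_fin_four, M24]
  apply mat4_eq <;> norm_num [Complex.ext_iff]
lemma h24 : M22 * M10 = M24 := by
  rw [M22, M10, mul_fin_four, M24]
  apply mat4_eq <;> norm_num [Complex.ext_iff]
lemma h25 : M14 * M0 = M25 := by
  rw [M14, M0, mul_fin_four, M25]
  apply mat4_eq <;> norm_num [Complex.ext_iff]
lemma h26 : M0 * M14 = M25 := by
  rw [M0, M14, mul_fin_four, M25]
  apply mat4_eq <;> norm_num [Complex.ext_iff]
lemma h27 : M10 * M0 = M9 := by
  rw [M10, M0, mul_fin_four, M9]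
  apply mat4_eq <;> norm_num [Complex.ext_iff]
lemma h28 : M9 * M10 = M26 := by
  rw [M9, M10, mul_fin_four, M26]
  apply mat4_eq <;> norm_num [Complex.ext_iff]
lemma h29 : M0 * M10 = M27 := by
  rw [M0, M10, mul_fin_four, M27]
  apply mat4_eq <;> norm_num [Complex.ext_iff]
lemma h30 : M27 * M0 = M26 := by
  rw [M27, M0, mul_fin_four, M26]
  apply mat4_eq <;> norm_num [Complex.ext_iff]
lemma h31 : M0 * M3 = M28 := by
  rw [M0, M3, mul_fin_four, M28]
  apply mat4_eq <;> norm_num [Complex.ext_iff]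
lemma h32 : M28 * M0 = M29 := by
  rw [M28, M0, mul_fin_four, M29]
  apply mat4_eq <;> norm_num [Complex.ext_iff]
lemma h33 : M3 * M0 = M30 := by
  rw [M3, M0, mul_fin_four, M30]
  apply mat4_eq <;> norm_num [Complex.ext_iff]
lemma h34 : M30 * M3 = M29 := by
  rw [M30, M3, mul_fin_four, M29]
  apply mat4_eq <;> norm_num [Complex.ext_iff]
lemma h35 : M22 * M3 = M21 := by
  rw [M22, M3, mul_fin_four, M21]
  apply mat4_eq <;> norm_num [Complex.ext_iff]
lemma h36 : M21 * M22 = M31 := by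
  rw [M21, M22, mul_fin_four, M31]
  apply mat4_eq <;> norm_num [Complex.ext_iff]
lemma h37 : M3 * M22 = M32 := by
  rw [M3, M22, mul_fin_four, M32]
  apply mat4_eq <;> norm_num [Complex.ext_iff]
lemma h38 : M32 * M3 = M31 := by
  rw [M32, M3, mul_fin_four, M31]
  apply mat4_eq <;> norm_num [Complex.ext_iff]
lemma h39 : M22 * M14 = M33 := by
  rw [M22, M14, mul_fin_four, M33]
  apply mat4_eq <;> norm_num [Complex.ext_iff]
lemma h40 : M33 * M22 = M34 := by
  rw [M33, M22, mul_fin_four, M34]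
  apply mat4_eq <;> norm_num [Complex.ext_iff]
lemma h41 : M14 * M22 = M35 := by
  rw [M14, M22, mul_fin_four, M35]
  apply mat4_eq <;> norm_num [Complex.ext_iff]
lemma h42 : M35 * M14 = M34 := by
  rw [M35, M14, mul_fin_four, M34]
  apply mat4_eq <;> norm_num [Complex.ext_iff]
lemma h43 : M10 * M3 = M36 := by
  rw [M10, M3, mul_fin_four, M36]
  apply mat4_eq <;> norm_num [Complex.ext_iff]
lemma h44 : M36 * M14 = M37 := by
  rw [M36, M14, mul_fin_four, M37]
  apply mat4_eq <;> norm_num [Complex.ext_iff]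
lemma h45 : M3 * M14 = M38 := by
  rw [M3, M14, mul_fin_four, M38]
  apply mat4_eq <;> norm_num [Complex.ext_iff]
lemma h46 : M38 * M10 = M37 := by
  rw [M38, M10, mul_fin_four, M37]
  apply mat4_eq <;> norm_num [Complex.ext_iff]
lemma h47 : M14 * M10 = M39 := by
  rw [M14, M10, mul_fin_four, M39]
  apply mat4_eq <;> norm_num [Complex.ext_iff]
lemma h48 : M39 * M3 = M37 := by
  rw [M39, M3, mul_fin_four, M37]
  apply mat4_eq <;> norm_num [Complex.ext_iff]

/-- The words s, t, u, v, w in the generators are involutions satisfying the defining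
    relations of the Shephard–Todd presentation of the complex reflection group G₃₁. -/
theorem stmt9 :
    let t := s 3
    let v := s 0
    let S := s 0 * s 4 * s 2 * s 3 * s 2 * s 4 * s 0
    let u := s 1 * s 0 * s 4 * s 0 * s 1
    let w := s 3 * s 1 * s 2 * s 4 * s 3 * s 4 * s 2 * s 1 * s 3
    S * S = 1 ∧ t * t = 1 ∧ u * u = 1 ∧ v * v = 1 ∧ w * w = 1 ∧
    S * w = w * S ∧ u * v = v * u ∧
    S * v * S = v * S * v ∧ v * t * v = t * v * t ∧
    w * t * w = t * w * t ∧ w * u * w = u * w * u ∧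
    S * t * u = t * u * S ∧ t * u * S = u * S * t := by
  simp only [and_true, true_and, and_self, eq_self_iff_true, sg0, sg1, sg2, sg3, sg4, h0, h1, h2, h3, h4, h5, h6, h7, h8, h9, h10, h11, h12, h13, h14, h15, h16, h17, h18, h19, h20, h21, h22, h23, h24, h25, h26, h27, h28, h29, h30, h31, h32, h33, h34, h35, h36, h37, h38, h39, h40, h41, h42, h43, h44, h45, h46, h47, h48]
end

section
/- Define s = s₁s₅s₃s₄s₃s₅s₁, t = s₄, u = s₂s₁s₅s₁s₂, v = s₁, w = s₄s₂s₃s₅s₄s₅s₃s₂s₄ in GL(4,ℂ). Each of s, t, u, v, w is a complex reflection (the rank of the matrix minus the identity equals 1) negating the indicated vector: s·(1,i,1+i,0)ᵀ = −(1,i,1+i,0)ᵀ, t·(1,1,1,1)ᵀ = −(1,1,1,1)ᵀ, u·(0,1+i,1,i)ᵀ = −(0,1+i,1,i)ᵀ, v·(1,0,0,0)ᵀ = −(1,0,0,0)ᵀ, and w·(0,0,0,1)ᵀ = −(0,0,0,1)ᵀ. -/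
open Complex Matrix MvPolynomial

lemma rank_vmv {n : ℕ} (w v : Fin n → ℂ) (i j : Fin n) (hw : w i ≠ 0) (hv : v j ≠ 0) :
    (vecMulVec w v).rank = 1 := by
  refine le_antisymm ?_ ?_
  · rw [vecMulVec_eq (Fin 1)]
    exact (rank_mul_le_left _ _).trans ((rank_le_card_width _).trans (by simp))
  · rw [Nat.succ_le_iff, Matrix.rank]
    have : Nontrivial (LinearMap.range (vecMulVec w v).mulVecLin) := by
      refine nontrivial_of_ne ⟨_, LinearMap.mem_range_self _ (Pi.single j 1)⟩ 0 ?_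
      intro h
      have h2 := congrFun (congrArg Subtype.val h) i
      simp [Matrix.mulVecLin_apply, vecMulVec_apply] at h2
      rcases h2 with h2 | h2
      exacts [hw h2, hv h2]
    exact Module.finrank_pos

lemma Sstep1 : s 0 * s 4 = !![0, 0, (1/2+I/2), (1/2-I/2); 0, 1, 0, 0; (-1/2+I/2), 0, 1/2, I/2; (-1/2-I/2), 0, -I/2, 1/2] := by
  ext i j
  fin_cases i <;> fin_cases j <;>
    simp [s, Matrix.mul_apply, Fin.sum_univ_four, Matrix.smul_apply, smul_eq_mul,
      Matrix.vecHead, Matrix.vecTail] <;>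
    ring_nf <;> (try simp [Complex.I_sq]) <;> (try ring_nf)

lemma Sstep2 : (!![0, 0, (1/2+I/2), (1/2-I/2); 0, 1, 0, 0; (-1/2+I/2), 0, 1/2, I/2; (-1/2-I/2), 0, -I/2, 1/2] : Matrix (Fin 4) (Fin 4) ℂ) * s 2 = !![0, 0, (1/2+I/2), (1/2-I/2); I, 0, 0, 0; 0, (1/2+I/2), 1/2, I/2; 0, (-1/2+I/2), -I/2, 1/2] := by
  ext i j
  fin_cases i <;> fin_cases j <;>
    simp [s, Matrix.mul_apply, Fin.sum_univ_four, Matrix.smul_apply, smul_eq_mul,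
      Matrix.vecHead, Matrix.vecTail] <;>
    ring_nf <;> (try simp [Complex.I_sq]) <;> (try ring_nf)

lemma Sstep3 : (!![0, 0, (1/2+I/2), (1/2-I/2); I, 0, 0, 0; 0, (1/2+I/2), 1/2, I/2; 0, (-1/2+I/2), -I/2, 1/2] : Matrix (Fin 4) (Fin 4) ℂ) * s 3 = !![-1/2, -1/2, I/2, -I/2; I/2, -I/2, -I/2, -I/2; (-1/2-I/2), 0, -I/2, -1/2; 0, (-1/2+I/2), -I/2, 1/2] := by
  ext i j
  fin_cases i <;> fin_cases j <;>
    simp [s, Matrix.mul_apply, Fin.sum_univ_four, Matrix.smul_apply, smul_eq_mul,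
      Matrix.vecHead, Matrix.vecTail] <;>
    ring_nf <;> (try simp [Complex.I_sq]) <;> (try ring_nf)

lemma Sstep4 : (!![-1/2, -1/2, I/2, -I/2; I/2, -I/2, -I/2, -I/2; (-1/2-I/2), 0, -I/2, -1/2; 0, (-1/2+I/2), -I/2, 1/2] : Matrix (Fin 4) (Fin 4) ℂ) * s 2 = !![-I/2, I/2, I/2, -I/2; 1/2, 1/2, -I/2, -I/2; 0, (-1/2+I/2), -I/2, -1/2; (-1/2-I/2), 0, -I/2, 1/2] := by
  ext i j
  fin_cases i <;> fin_cases j <;>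
    simp [s, Matrix.mul_apply, Fin.sum_univ_four, Matrix.smul_apply, smul_eq_mul,
      Matrix.vecHead, Matrix.vecTail] <;>
    ring_nf <;> (try simp [Complex.I_sq]) <;> (try ring_nf)

lemma Sstep5 : (!![-I/2, I/2, I/2, -I/2; 1/2, 1/2, -I/2, -I/2; 0, (-1/2+I/2), -I/2, -1/2; (-1/2-I/2), 0, -I/2, 1/2] : Matrix (Fin 4) (Fin 4) ℂ) * s 4 = !![-1/2, I/2, (-1/2+I/2), 0; I/2, 1/2, (-1/2-I/2), 0; (1/2+I/2), (-1/2+I/2), 0, 0; 0, 0, 0, 1] := by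
  ext i j
  fin_cases i <;> fin_cases j <;>
    simp [s, Matrix.mul_apply, Fin.sum_univ_four, Matrix.smul_apply, smul_eq_mul,
      Matrix.vecHead, Matrix.vecTail] <;>
    ring_nf <;> (try simp [Complex.I_sq]) <;> (try ring_nf)

lemma Sstep6 : (!![-1/2, I/2, (-1/2+I/2), 0; I/2, 1/2, (-1/2-I/2), 0; (1/2+I/2), (-1/2+I/2), 0, 0; 0, 0, 0, 1] : Matrix (Fin 4) (Fin 4) ℂ) * s 0 = !![1/2, I/2, (-1/2+I/2), 0; -I/2, 1/2, (-1/2-I/2), 0; (-1/2-I/2), (-1/2+I/2), 0, 0; 0, 0, 0, 1] := by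
  ext i j
  fin_cases i <;> fin_cases j <;>
    simp [s, Matrix.mul_apply, Fin.sum_univ_four, Matrix.smul_apply, smul_eq_mul,
      Matrix.vecHead, Matrix.vecTail] <;>
    ring_nf <;> (try simp [Complex.I_sq]) <;> (try ring_nf)

lemma sSeq : s 0 * s 4 * s 2 * s 3 * s 2 * s 4 * s 0 = (!![1/2, I/2, (-1/2+I/2), 0; -I/2, 1/2, (-1/2-I/2), 0; (-1/2-I/2), (-1/2+I/2), 0, 0; 0, 0, 0, 1] : Matrix (Fin 4) (Fin 4) ℂ) := by
  rw [Sstep1, Sstep2, Sstep3, Sstep4, Sstep5, Sstep6]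

lemma ustep1 : s 1 * s 0 = !![0, -1, 0, 0; 1, 0, 0, 0; 0, 0, 1, 0; 0, 0, 0, 1] := by
  ext i j
  fin_cases i <;> fin_cases j <;>
    simp [s, Matrix.mul_apply, Fin.sum_univ_four, Matrix.smul_apply, smul_eq_mul,
      Matrix.vecHead, Matrix.vecTail] <;>
    ring_nf <;> (try simp [Complex.I_sq]) <;> (try ring_nf)

lemma ustep2 : (!![0, -1, 0, 0; 1, 0, 0, 0; 0, 0, 1, 0; 0, 0, 0, 1] : Matrix (Fin 4) (Fin 4) ℂ) * s 4 = !![0, -1, 0, 0; 0, 0, (-1/2-I/2), (-1/2+I/2); (-1/2+I/2), 0, 1/2, I/2; (-1/2-I/2), 0, -I/2, 1/2] := by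
  ext i j
  fin_cases i <;> fin_cases j <;>
    simp [s, Matrix.mul_apply, Fin.sum_univ_four, Matrix.smul_apply, smul_eq_mul,
      Matrix.vecHead, Matrix.vecTail] <;>
    ring_nf <;> (try simp [Complex.I_sq]) <;> (try ring_nf)

lemma ustep3 : (!![0, -1, 0, 0; 0, 0, (-1/2-I/2), (-1/2+I/2); (-1/2+I/2), 0, 1/2, I/2; (-1/2-I/2), 0, -I/2, 1/2] : Matrix (Fin 4) (Fin 4) ℂ) * s 0 = !![0, -1, 0, 0; 0, 0, (-1/2-I/2), (-1/2+I/2); (1/2-I/2), 0, 1/2, I/2; (1/2+I/2), 0, -I/2, 1/2] := by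
  ext i j
  fin_cases i <;> fin_cases j <;>
    simp [s, Matrix.mul_apply, Fin.sum_univ_four, Matrix.smul_apply, smul_eq_mul,
      Matrix.vecHead, Matrix.vecTail] <;>
    ring_nf <;> (try simp [Complex.I_sq]) <;> (try ring_nf)

lemma ustep4 : (!![0, -1, 0, 0; 0, 0, (-1/2-I/2), (-1/2+I/2); (1/2-I/2), 0, 1/2, I/2; (1/2+I/2), 0, -I/2, 1/2] : Matrix (Fin 4) (Fin 4) ℂ) * s 1 = !![1, 0, 0, 0; 0, 0, (-1/2-I/2), (-1/2+I/2); 0, (-1/2+I/2), 1/2, I/2; 0, (-1/2-I/2), -I/2, 1/2] := by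
  ext i j
  fin_cases i <;> fin_cases j <;>
    simp [s, Matrix.mul_apply, Fin.sum_univ_four, Matrix.smul_apply, smul_eq_mul,
      Matrix.vecHead, Matrix.vecTail] <;>
    ring_nf <;> (try simp [Complex.I_sq]) <;> (try ring_nf)

lemma uuEq : s 1 * s 0 * s 4 * s 0 * s 1 = (!![1, 0, 0, 0; 0, 0, (-1/2-I/2), (-1/2+I/2); 0, (-1/2+I/2), 1/2, I/2; 0, (-1/2-I/2), -I/2, 1/2] : Matrix (Fin 4) (Fin 4) ℂ) := by
  rw [ustep1, ustep2, ustep3, ustep4]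

lemma wstep1 : s 3 * s 1 = !![1/2, -1/2, -1/2, -1/2; -1/2, 1/2, -1/2, -1/2; 1/2, 1/2, 1/2, -1/2; 1/2, 1/2, -1/2, 1/2] := by
  ext i j
  fin_cases i <;> fin_cases j <;>
    simp [s, Matrix.mul_apply, Fin.sum_univ_four, Matrix.smul_apply, smul_eq_mul,
      Matrix.vecHead, Matrix.vecTail] <;>
    ring_nf <;> (try simp [Complex.I_sq]) <;> (try ring_nf)

lemma wstep2 : (!![1/2, -1/2, -1/2, -1/2; -1/2, 1/2, -1/2, -1/2; 1/2, 1/2, 1/2, -1/2; 1/2, 1/2, -1/2, 1/2] : Matrix (Fin 4) (Fin 4) ℂ) * s 2 = !![-I/2, -I/2, -1/2, -1/2; I/2, I/2, -1/2, -1/2; I/2, -I/2, 1/2, -1/2; I/2, -I/2, -1/2, 1/2] := by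
  ext i j
  fin_cases i <;> fin_cases j <;>
    simp [s, Matrix.mul_apply, Fin.sum_univ_four, Matrix.smul_apply, smul_eq_mul,
      Matrix.vecHead, Matrix.vecTail] <;>
    ring_nf <;> (try simp [Complex.I_sq]) <;> (try ring_nf)

lemma wstep3 : (!![-I/2, -I/2, -1/2, -1/2; I/2, I/2, -1/2, -1/2; I/2, -I/2, 1/2, -1/2; I/2, -I/2, -1/2, 1/2] : Matrix (Fin 4) (Fin 4) ℂ) * s 4 = !![1/2, -I/2, (-1/2+I/2), 0; 1/2, I/2, 0, (-1/2-I/2); I/2, -I/2, 1/2, -1/2; -I/2, -I/2, -I/2, -I/2] := by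
  ext i j
  fin_cases i <;> fin_cases j <;>
    simp [s, Matrix.mul_apply, Fin.sum_univ_four, Matrix.smul_apply, smul_eq_mul,
      Matrix.vecHead, Matrix.vecTail] <;>
    ring_nf <;> (try simp [Complex.I_sq]) <;> (try ring_nf)

lemma wstep4 : (!![1/2, -I/2, (-1/2+I/2), 0; 1/2, I/2, 0, (-1/2-I/2); I/2, -I/2, 1/2, -1/2; -I/2, -I/2, -I/2, -I/2] : Matrix (Fin 4) (Fin 4) ℂ) * s 3 = !![1/2, -I/2, (-1/2+I/2), 0; 1/2, I/2, 0, (-1/2-I/2); I/2, -I/2, 1/2, -1/2; I/2, I/2, I/2, I/2] := by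
  ext i j
  fin_cases i <;> fin_cases j <;>
    simp [s, Matrix.mul_apply, Fin.sum_univ_four, Matrix.smul_apply, smul_eq_mul,
      Matrix.vecHead, Matrix.vecTail] <;>
    ring_nf <;> (try simp [Complex.I_sq]) <;> (try ring_nf)

lemma wstep5 : (!![1/2, -I/2, (-1/2+I/2), 0; 1/2, I/2, 0, (-1/2-I/2); I/2, -I/2, 1/2, -1/2; I/2, I/2, I/2, I/2] : Matrix (Fin 4) (Fin 4) ℂ) * s 4 = !![-I/2, -I/2, -1/2, -1/2; I/2, I/2, -1/2, -1/2; I/2, -I/2, 1/2, -1/2; -I/2, I/2, 1/2, -1/2] := by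
  ext i j
  fin_cases i <;> fin_cases j <;>
    simp [s, Matrix.mul_apply, Fin.sum_univ_four, Matrix.smul_apply, smul_eq_mul,
      Matrix.vecHead, Matrix.vecTail] <;>
    ring_nf <;> (try simp [Complex.I_sq]) <;> (try ring_nf)

lemma wstep6 : (!![-I/2, -I/2, -1/2, -1/2; I/2, I/2, -1/2, -1/2; I/2, -I/2, 1/2, -1/2; -I/2, I/2, 1/2, -1/2] : Matrix (Fin 4) (Fin 4) ℂ) * s 2 = !![1/2, -1/2, -1/2, -1/2; -1/2, 1/2, -1/2, -1/2; 1/2, 1/2, 1/2, -1/2; -1/2, -1/2, 1/2, -1/2] := by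
  ext i j
  fin_cases i <;> fin_cases j <;>
    simp [s, Matrix.mul_apply, Fin.sum_univ_four, Matrix.smul_apply, smul_eq_mul,
      Matrix.vecHead, Matrix.vecTail] <;>
    ring_nf <;> (try simp [Complex.I_sq]) <;> (try ring_nf)

lemma wstep7 : (!![1/2, -1/2, -1/2, -1/2; -1/2, 1/2, -1/2, -1/2; 1/2, 1/2, 1/2, -1/2; -1/2, -1/2, 1/2, -1/2] : Matrix (Fin 4) (Fin 4) ℂ) * s 1 = !![1/2, -1/2, -1/2, -1/2; -1/2, 1/2, -1/2, -1/2; -1/2, -1/2, 1/2, -1/2; 1/2, 1/2, 1/2, -1/2] := by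
  ext i j
  fin_cases i <;> fin_cases j <;>
    simp [s, Matrix.mul_apply, Fin.sum_univ_four, Matrix.smul_apply, smul_eq_mul,
      Matrix.vecHead, Matrix.vecTail] <;>
    ring_nf <;> (try simp [Complex.I_sq]) <;> (try ring_nf)

lemma wstep8 : (!![1/2, -1/2, -1/2, -1/2; -1/2, 1/2, -1/2, -1/2; -1/2, -1/2, 1/2, -1/2; 1/2, 1/2, 1/2, -1/2] : Matrix (Fin 4) (Fin 4) ℂ) * s 3 = !![1, 0, 0, 0; 0, 1, 0, 0; 0, 0, 1, 0; 0, 0, 0, -1] := by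
  ext i j
  fin_cases i <;> fin_cases j <;>
    simp [s, Matrix.mul_apply, Fin.sum_univ_four, Matrix.smul_apply, smul_eq_mul,
      Matrix.vecHead, Matrix.vecTail] <;>
    ring_nf <;> (try simp [Complex.I_sq]) <;> (try ring_nf)

lemma wwEq : s 3 * s 1 * s 2 * s 4 * s 3 * s 4 * s 2 * s 1 * s 3 = (!![1, 0, 0, 0; 0, 1, 0, 0; 0, 0, 1, 0; 0, 0, 0, -1] : Matrix (Fin 4) (Fin 4) ℂ) := by
  rw [wstep1, wstep2, wstep3, wstep4, wstep5, wstep6, wstep7, wstep8]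

lemma Ssub : (!![1/2, I/2, (-1/2+I/2), 0; -I/2, 1/2, (-1/2-I/2), 0; (-1/2-I/2), (-1/2+I/2), 0, 0; 0, 0, 0, 1] : Matrix (Fin 4) (Fin 4) ℂ) - 1 =
    vecMulVec ![-1/2, -I/2, (-1-I)/2, 0] ![1, -I, 1-I, 0] := by
  ext i j
  fin_cases i <;> fin_cases j <;>
    simp [vecMulVec_apply, Matrix.sub_apply, Matrix.one_apply, Matrix.vecHead, Matrix.vecTail] <;>
    ring_nf <;> (try simp [Complex.I_sq]) <;> (try ring_nf)

lemma tsub : s 3 - 1 = vecMulVec ![-1/2, -1/2, -1/2, -1/2] ![1, 1, 1, 1] := by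
  ext i j
  fin_cases i <;> fin_cases j <;>
    simp [s, vecMulVec_apply, Matrix.sub_apply, Matrix.one_apply, Matrix.vecHead, Matrix.vecTail, Matrix.smul_apply,
      smul_eq_mul, Matrix.vecHead, Matrix.vecTail] <;>
    ring_nf <;> (try simp [Complex.I_sq]) <;> (try ring_nf)

lemma usub : (!![1, 0, 0, 0; 0, 0, (-1/2-I/2), (-1/2+I/2); 0, (-1/2+I/2), 1/2, I/2; 0, (-1/2-I/2), -I/2, 1/2] : Matrix (Fin 4) (Fin 4) ℂ) - 1 =
    vecMulVec ![0, (-1-I)/2, -1/2, -I/2] ![0, 1-I, 1, -I] := by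
  ext i j
  fin_cases i <;> fin_cases j <;>
    simp [vecMulVec_apply, Matrix.sub_apply, Matrix.one_apply, Matrix.vecHead, Matrix.vecTail] <;>
    ring_nf <;> (try simp [Complex.I_sq]) <;> (try ring_nf)

lemma vsub : s 0 - 1 = vecMulVec ![-2, 0, 0, 0] ![1, 0, 0, 0] := by
  ext i j
  fin_cases i <;> fin_cases j <;>
    simp [s, vecMulVec_apply, Matrix.sub_apply, Matrix.one_apply, Matrix.vecHead, Matrix.vecTail] <;>
    ring_nf <;> (try simp [Complex.I_sq]) <;> (try ring_nf)

lemma wsub : (!![1, 0, 0, 0; 0, 1, 0, 0; 0, 0, 1, 0; 0, 0, 0, -1] : Matrix (Fin 4) (Fin 4) ℂ) - 1 =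
    vecMulVec ![0, 0, 0, -2] ![0, 0, 0, 1] := by
  ext i j
  fin_cases i <;> fin_cases j <;>
    simp [vecMulVec_apply, Matrix.sub_apply, Matrix.one_apply, Matrix.vecHead, Matrix.vecTail] <;>
    ring_nf <;> (try simp [Complex.I_sq]) <;> (try ring_nf)

/-- The words s, t, u, v, w are complex reflections (rank of the matrix minus the identity
    equals 1), each negating the indicated vector. -/
theorem stmt10 :
    let t := s 3
    let v := s 0
    let S := s 0 * s 4 * s 2 * s 3 * s 2 * s 4 * s 0
    let u := s 1 * s 0 * s 4 * s 0 * s 1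
    let w := s 3 * s 1 * s 2 * s 4 * s 3 * s 4 * s 2 * s 1 * s 3
    ((S - 1).rank = 1 ∧ S.mulVec ![1, I, 1 + I, 0] = -![1, I, 1 + I, 0]) ∧
    ((t - 1).rank = 1 ∧ t.mulVec ![1, 1, 1, 1] = -![1, 1, 1, 1]) ∧
    ((u - 1).rank = 1 ∧ u.mulVec ![0, 1 + I, 1, I] = -![0, 1 + I, 1, I]) ∧
    ((v - 1).rank = 1 ∧ v.mulVec ![1, 0, 0, 0] = -![1, 0, 0, 0]) ∧
    ((w - 1).rank = 1 ∧ w.mulVec ![0, 0, 0, 1] = -![0, 0, 0, 1]) := by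
  refine ⟨⟨?_, ?_⟩, ⟨?_, ?_⟩, ⟨?_, ?_⟩, ⟨?_, ?_⟩, ⟨?_, ?_⟩⟩
  · rw [show (s 0 * s 4 * s 2 * s 3 * s 2 * s 4 * s 0 : Matrix (Fin 4) (Fin 4) ℂ) = _ from sSeq,
      Ssub]
    exact rank_vmv _ _ 0 0 (by norm_num) (by norm_num)
  · rw [show (s 0 * s 4 * s 2 * s 3 * s 2 * s 4 * s 0 : Matrix (Fin 4) (Fin 4) ℂ) = _ from sSeq]
    funext i
    fin_cases i <;>
      simp [Matrix.mulVec, dotProduct, Fin.sum_univ_four] <;>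
      ring_nf <;> (try simp [Complex.I_sq]) <;> (try ring_nf)
  · rw [show (s 3 - 1 : Matrix (Fin 4) (Fin 4) ℂ) = _ from tsub]
    exact rank_vmv _ _ 0 0 (by norm_num) (by norm_num)
  · funext i
    fin_cases i <;>
      simp [s, Matrix.mulVec, dotProduct, Fin.sum_univ_four, Matrix.smul_apply,
        smul_eq_mul, Matrix.vecHead, Matrix.vecTail] <;>
      ring_nf <;> (try simp [Complex.I_sq]) <;> (try ring_nf)
  · rw [show (s 1 * s 0 * s 4 * s 0 * s 1 : Matrix (Fin 4) (Fin 4) ℂ) = _ from uuEq, usub]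
    exact rank_vmv _ _ 2 2 (by simp) (by simp)
  · rw [show (s 1 * s 0 * s 4 * s 0 * s 1 : Matrix (Fin 4) (Fin 4) ℂ) = _ from uuEq]
    funext i
    fin_cases i <;>
      simp [Matrix.mulVec, dotProduct, Fin.sum_univ_four] <;>
      ring_nf <;> (try simp [Complex.I_sq]) <;> (try ring_nf)
  · rw [show (s 0 - 1 : Matrix (Fin 4) (Fin 4) ℂ) = _ from vsub]
    exact rank_vmv _ _ 0 0 (by norm_num) (by norm_num)
  · funext i
    fin_cases i <;>
      simp [s, Matrix.mulVec, dotProduct, Fin.sum_univ_four] <;>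
      ring_nf <;> (try simp [Complex.I_sq]) <;> (try ring_nf)
  · rw [show (s 3 * s 1 * s 2 * s 4 * s 3 * s 4 * s 2 * s 1 * s 3 : Matrix (Fin 4) (Fin 4) ℂ) = _
      from wwEq, wsub]
    exact rank_vmv _ _ 3 3 (by simp) (by simp)
  · rw [show (s 3 * s 1 * s 2 * s 4 * s 3 * s 4 * s 2 * s 1 * s 3 : Matrix (Fin 4) (Fin 4) ℂ) = _
      from wwEq]
    funext i
    fin_cases i <;>
      simp [Matrix.mulVec, dotProduct, Fin.sum_univ_four] <;>
      ring_nf <;> (try simp [Complex.I_sq]) <;> (try ring_nf)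
end
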